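/- Let n ≥ 1 be an integer and let u : ℝ² → ℝ be a twice continuously differentiable solution of the n-th asymptotic equation, i.e. ∂_x(u_t + uⁿ·u_x) = (n/2)·u^{n−1}·u_x² at every point (t,x). Then u is a stationary point of the action functional 𝒜_n: for every smooth compactly supported function v : ℝ² → ℝ, the function ε ↦ ∫∫_{ℝ²} [ ∂_x(u+εv)·∂_t(u+εv) + (u+εv)ⁿ·(∂_x(u+εv))² − (u_x·u_t + uⁿ·u_x²) ] dx dt is differentiable at ε = 0 with derivative equal to 0. -/

import Mathlib

open MeasureTheory Set Real
namespace Stmt9Aux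

noncomputable def px (f : ℝ × ℝ → ℝ) (p : ℝ × ℝ) : ℝ := fderiv ℝ f p (0, 1)
noncomputable def pt (f : ℝ × ℝ → ℝ) (p : ℝ × ℝ) : ℝ := fderiv ℝ f p (1, 0)

lemma hasDerivAt_snd {f : ℝ × ℝ → ℝ} {p : ℝ × ℝ} (hf : DifferentiableAt ℝ f p) :
    HasDerivAt (fun x' => f (p.1, x')) (fderiv ℝ f p (0, 1)) p.2 := by
  have h : HasDerivAt (fun x' : ℝ => ((p.1 : ℝ), x')) ((0 : ℝ), (1 : ℝ)) p.2 :=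
    (hasDerivAt_const p.2 p.1).prodMk (hasDerivAt_id p.2)
  exact hf.hasFDerivAt.comp_hasDerivAt p.2 h

lemma hasDerivAt_fst {f : ℝ × ℝ → ℝ} {p : ℝ × ℝ} (hf : DifferentiableAt ℝ f p) :
    HasDerivAt (fun t' => f (t', p.2)) (fderiv ℝ f p (1, 0)) p.1 := by
  have h : HasDerivAt (fun t' : ℝ => (t', (p.2 : ℝ))) ((1 : ℝ), (0 : ℝ)) p.1 :=
    (hasDerivAt_id p.1).prodMk (hasDerivAt_const p.1 p.2)
  exact hf.hasFDerivAt.comp_hasDerivAt p.1 h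

lemma integral_deriv_zero {f : ℝ → ℝ} (hf : ContDiff ℝ 1 f) (h2f : HasCompactSupport f) :
    ∫ x, deriv f x = 0 := by
  have hint : Integrable (deriv f) :=
    (hf.continuous_deriv le_rfl).integrable_of_hasCompactSupport h2f.deriv
  rw [← intervalIntegral.integral_Iic_add_Ioi (b := 0) hint.integrableOn hint.integrableOn,
    h2f.integral_Iic_deriv_eq hf 0, h2f.integral_Ioi_deriv_eq hf 0]
  ring

lemma slice_snd_support {f : ℝ × ℝ → ℝ} (hf : HasCompactSupport f) (t : ℝ) :
    HasCompactSupport fun x' => f (t, x') := by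
  apply HasCompactSupport.intro (hf.image continuous_snd)
  intro x hx
  by_contra h
  exact hx ⟨(t, x), subset_tsupport _ h, rfl⟩

lemma slice_fst_support {f : ℝ × ℝ → ℝ} (hf : HasCompactSupport f) (x : ℝ) :
    HasCompactSupport fun t' => f (t', x) := by
  apply HasCompactSupport.intro (hf.image continuous_fst)
  intro t ht
  by_contra h
  exact ht ⟨(t, x), subset_tsupport _ h, rfl⟩

lemma fderiv_apply_support {f : ℝ × ℝ → ℝ} (hf : HasCompactSupport f) (w : ℝ × ℝ) :
    HasCompactSupport fun p => fderiv ℝ f p w := by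
  apply HasCompactSupport.intro hf
  intro p hp
  have h0 : fderiv ℝ f p = 0 := by
    by_contra h
    exact hp (support_fderiv_subset ℝ (by simpa [Function.mem_support] using h))
  simp [h0]

lemma integral_pd_snd_eq_zero {f : ℝ × ℝ → ℝ} (hf : ContDiff ℝ 1 f)
    (h2f : HasCompactSupport f) :
    ∫ p : ℝ × ℝ, fderiv ℝ f p (0, 1) = 0 := by
  have hcont : Continuous fun p => fderiv ℝ f p ((0 : ℝ), (1 : ℝ)) :=
    (hf.continuous_fderiv one_ne_zero).clm_apply continuous_const
  have hint : Integrable (fun p : ℝ × ℝ => fderiv ℝ f p (0, 1)) :=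
    hcont.integrable_of_hasCompactSupport (fderiv_apply_support h2f _)
  rw [Measure.volume_eq_prod] at hint ⊢
  rw [integral_prod _ hint]
  have hinner : ∀ t : ℝ, (∫ x : ℝ, fderiv ℝ f (t, x) (0, 1)) = 0 := by
    intro t
    have h1 : ContDiff ℝ 1 fun x' => f (t, x') := hf.comp (contDiff_const.prodMk contDiff_id)
    have h3 : ∀ x : ℝ, fderiv ℝ f (t, x) (0, 1) = deriv (fun x' => f (t, x')) x := fun x =>
      (hasDerivAt_snd (hf.differentiable one_ne_zero (t, x))).deriv.symm
    simp_rw [h3]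
    exact integral_deriv_zero h1 (slice_snd_support h2f t)
  simp [hinner]

lemma integral_pd_fst_eq_zero {f : ℝ × ℝ → ℝ} (hf : ContDiff ℝ 1 f)
    (h2f : HasCompactSupport f) :
    ∫ p : ℝ × ℝ, fderiv ℝ f p (1, 0) = 0 := by
  have hcont : Continuous fun p => fderiv ℝ f p ((1 : ℝ), (0 : ℝ)) :=
    (hf.continuous_fderiv one_ne_zero).clm_apply continuous_const
  have hint : Integrable (fun p : ℝ × ℝ => fderiv ℝ f p (1, 0)) :=
    hcont.integrable_of_hasCompactSupport (fderiv_apply_support h2f _)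
  rw [Measure.volume_eq_prod] at hint ⊢
  rw [integral_prod_symm _ hint]
  have hinner : ∀ x : ℝ, (∫ t : ℝ, fderiv ℝ f (t, x) (1, 0)) = 0 := by
    intro x
    have h1 : ContDiff ℝ 1 fun t' => f (t', x) := hf.comp (contDiff_id.prodMk contDiff_const)
    have h3 : ∀ t : ℝ, fderiv ℝ f (t, x) (1, 0) = deriv (fun t' => f (t', x)) t := fun t =>
      (hasDerivAt_fst (hf.differentiable one_ne_zero (t, x))).deriv.symm
    simp_rw [h3]
    exact integral_deriv_zero h1 (slice_fst_support h2f x)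
  simp [hinner]

noncomputable def GG (n : ℕ) (u v : ℝ → ℝ → ℝ) (ε : ℝ) (p : ℝ × ℝ) : ℝ :=
  (px (Function.uncurry u) p + ε * px (Function.uncurry v) p) *
      (pt (Function.uncurry u) p + ε * pt (Function.uncurry v) p) +
    (u p.1 p.2 + ε * v p.1 p.2) ^ n *
      (px (Function.uncurry u) p + ε * px (Function.uncurry v) p) ^ 2 -
    (px (Function.uncurry u) p * pt (Function.uncurry u) p +
      u p.1 p.2 ^ n * px (Function.uncurry u) p ^ 2)

noncomputable def GG' (n : ℕ) (u v : ℝ → ℝ → ℝ) (ε : ℝ) (p : ℝ × ℝ) : ℝ :=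
  px (Function.uncurry v) p * (pt (Function.uncurry u) p + ε * pt (Function.uncurry v) p) +
    (px (Function.uncurry u) p + ε * px (Function.uncurry v) p) * pt (Function.uncurry v) p +
    ((n : ℝ) * (u p.1 p.2 + ε * v p.1 p.2) ^ (n - 1) * v p.1 p.2 *
        (px (Function.uncurry u) p + ε * px (Function.uncurry v) p) ^ 2 +
      (u p.1 p.2 + ε * v p.1 p.2) ^ n *
        (2 * (px (Function.uncurry u) p + ε * px (Function.uncurry v) p) *
          px (Function.uncurry v) p))

noncomputable def Phi (n : ℕ) (u : ℝ → ℝ → ℝ) : ℝ × ℝ → ℝ :=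
  fun q => u q.1 q.2 ^ n * px (Function.uncurry u) q

noncomputable def F1 (u v : ℝ → ℝ → ℝ) : ℝ × ℝ → ℝ :=
  fun q => px (Function.uncurry u) q * v q.1 q.2

noncomputable def F2 (n : ℕ) (u v : ℝ → ℝ → ℝ) : ℝ × ℝ → ℝ :=
  fun q => (pt (Function.uncurry u) q + 2 * Phi n u q) * v q.1 q.2

end Stmt9Aux

open Stmt9Aux

/-- A `C²` solution of the `n`-th asymptotic equation
`∂_x(u_t + uⁿ u_x) = (n/2) u^{n-1} u_x²` is a stationary point of the action
functional `𝒜_n = ∫∫ [u_x u_t + uⁿ u_x²] dx dt` (relative to the background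
solution `u`): for every smooth compactly supported perturbation `v`, the
first variation of the action vanishes. -/
theorem stmt9 (n : ℕ) (hn : 1 ≤ n)
    (u : ℝ → ℝ → ℝ) (hu : ContDiff ℝ 2 (Function.uncurry u))
    (heq : ∀ t x : ℝ,
      deriv (fun x' => deriv (fun s => u s x') t + (u t x') ^ n * deriv (fun z => u t z) x') x =
        ((n : ℝ) / 2) * (u t x) ^ (n - 1) * (deriv (fun z => u t z) x) ^ 2) :
    ∀ v : ℝ → ℝ → ℝ, ContDiff ℝ (⊤ : ℕ∞) (Function.uncurry v) →
      HasCompactSupport (Function.uncurry v) →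
      HasDerivAt (fun ε : ℝ =>
        ∫ p : ℝ × ℝ,
          (deriv (fun x' => u p.1 x' + ε * v p.1 x') p.2 *
              deriv (fun t' => u t' p.2 + ε * v t' p.2) p.1 +
            (u p.1 p.2 + ε * v p.1 p.2) ^ n *
              (deriv (fun x' => u p.1 x' + ε * v p.1 x') p.2) ^ 2 -
            (deriv (fun x' => u p.1 x') p.2 * deriv (fun t' => u t' p.2) p.1 +
              (u p.1 p.2) ^ n * (deriv (fun x' => u p.1 x') p.2) ^ 2)))
        0 0 := by
  intro v hv hvs
  have hv2 : ContDiff ℝ 2 (Function.uncurry v) := hv.of_le (by exact WithTop.coe_le_coe.mpr (le_top : (2 : ℕ∞) ≤ ⊤))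
  have hUd : Differentiable ℝ (Function.uncurry u) := hu.differentiable two_ne_zero
  have hVd : Differentiable ℝ (Function.uncurry v) := hv2.differentiable two_ne_zero
  -- first-order smoothness facts
  have hux1 : ContDiff ℝ 1 (px (Function.uncurry u)) :=
    (hu.fderiv_right (m := 1) (by norm_num)).clm_apply contDiff_const
  have hut1 : ContDiff ℝ 1 (pt (Function.uncurry u)) :=
    (hu.fderiv_right (m := 1) (by norm_num)).clm_apply contDiff_const
  have hvx1 : ContDiff ℝ 1 (px (Function.uncurry v)) :=
    (hv2.fderiv_right (m := 1) (by norm_num)).clm_apply contDiff_const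
  have hvt1 : ContDiff ℝ 1 (pt (Function.uncurry v)) :=
    (hv2.fderiv_right (m := 1) (by norm_num)).clm_apply contDiff_const
  have hU1 : ContDiff ℝ 1 (fun q : ℝ × ℝ => u q.1 q.2) := hu.of_le one_le_two
  have hV1 : ContDiff ℝ 1 (fun q : ℝ × ℝ => v q.1 q.2) := hv2.of_le one_le_two
  have hPhi1 : ContDiff ℝ 1 (Phi n u) := (hU1.pow n).mul hux1
  have hF11 : ContDiff ℝ 1 (F1 u v) := hux1.mul hV1
  have hF21 : ContDiff ℝ 1 (F2 n u v) := (hut1.add (contDiff_const.mul hPhi1)).mul hV1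
  have hVs' : HasCompactSupport (fun q : ℝ × ℝ => v q.1 q.2) := hvs
  have hs1 : HasCompactSupport (F1 u v) := hVs'.mul_left
  have hs2 : HasCompactSupport (F2 n u v) := hVs'.mul_left
  -- continuity facts
  have hcpxu : Continuous (px (Function.uncurry u)) :=
    (hu.continuous_fderiv two_ne_zero).clm_apply continuous_const
  have hcptu : Continuous (pt (Function.uncurry u)) :=
    (hu.continuous_fderiv two_ne_zero).clm_apply continuous_const
  have hcpxv : Continuous (px (Function.uncurry v)) :=
    (hv2.continuous_fderiv two_ne_zero).clm_apply continuous_const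
  have hcptv : Continuous (pt (Function.uncurry v)) :=
    (hv2.continuous_fderiv two_ne_zero).clm_apply continuous_const
  have hcu : Continuous (fun q : ℝ × ℝ => u q.1 q.2) := hu.continuous
  have hcv : Continuous (fun q : ℝ × ℝ => v q.1 q.2) := hv.continuous
  -- derivative formulas in space
  have hDx : ∀ (ε : ℝ) (p : ℝ × ℝ), HasDerivAt (fun x' => u p.1 x' + ε * v p.1 x')
      (px (Function.uncurry u) p + ε * px (Function.uncurry v) p) p.2 := fun ε p =>
    (hasDerivAt_snd (hUd p)).add ((hasDerivAt_snd (hVd p)).const_mul ε)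
  have hDt : ∀ (ε : ℝ) (p : ℝ × ℝ), HasDerivAt (fun t' => u t' p.2 + ε * v t' p.2)
      (pt (Function.uncurry u) p + ε * pt (Function.uncurry v) p) p.1 := fun ε p =>
    (hasDerivAt_fst (hUd p)).add ((hasDerivAt_fst (hVd p)).const_mul ε)
  have hx0 : ∀ p : ℝ × ℝ, deriv (fun x' => u p.1 x') p.2 = px (Function.uncurry u) p :=
    fun p => (hasDerivAt_snd (hUd p)).deriv
  have ht0 : ∀ p : ℝ × ℝ, deriv (fun t' => u t' p.2) p.1 = pt (Function.uncurry u) p :=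
    fun p => (hasDerivAt_fst (hUd p)).deriv
  -- the integrand equals GG
  have hfun : (fun ε : ℝ =>
      ∫ p : ℝ × ℝ,
        (deriv (fun x' => u p.1 x' + ε * v p.1 x') p.2 *
            deriv (fun t' => u t' p.2 + ε * v t' p.2) p.1 +
          (u p.1 p.2 + ε * v p.1 p.2) ^ n *
            (deriv (fun x' => u p.1 x' + ε * v p.1 x') p.2) ^ 2 -
          (deriv (fun x' => u p.1 x') p.2 * deriv (fun t' => u t' p.2) p.1 +
            (u p.1 p.2) ^ n * (deriv (fun x' => u p.1 x') p.2) ^ 2))) =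
      fun ε => ∫ p : ℝ × ℝ, GG n u v ε p := by
    funext ε
    congr 1
    funext p
    rw [(hDx ε p).deriv, (hDt ε p).deriv, hx0 p, ht0 p]
    rfl
  rw [hfun]
  -- derivative of GG in ε
  have hG'At : ∀ (p : ℝ × ℝ) (ε : ℝ),
      HasDerivAt (fun e => GG n u v e p) (GG' n u v ε p) ε := by
    intro p ε
    have h1 : HasDerivAt (fun e : ℝ =>
        px (Function.uncurry u) p + e * px (Function.uncurry v) p)
        (px (Function.uncurry v) p) ε := by
      simpa using ((hasDerivAt_id ε).mul_const (px (Function.uncurry v) p)).const_add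
        (px (Function.uncurry u) p)
    have h2 : HasDerivAt (fun e : ℝ =>
        pt (Function.uncurry u) p + e * pt (Function.uncurry v) p)
        (pt (Function.uncurry v) p) ε := by
      simpa using ((hasDerivAt_id ε).mul_const (pt (Function.uncurry v) p)).const_add
        (pt (Function.uncurry u) p)
    have h3 : HasDerivAt (fun e : ℝ => u p.1 p.2 + e * v p.1 p.2) (v p.1 p.2) ε := by
      simpa using ((hasDerivAt_id ε).mul_const (v p.1 p.2)).const_add (u p.1 p.2)
    have h := ((h1.mul h2).add ((h3.pow n).mul (h1.pow 2))).sub_const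
      (px (Function.uncurry u) p * pt (Function.uncurry u) p +
        u p.1 p.2 ^ n * px (Function.uncurry u) p ^ 2)
    have hfn : (fun e : ℝ =>
        (px (Function.uncurry u) p + e * px (Function.uncurry v) p) *
            (pt (Function.uncurry u) p + e * pt (Function.uncurry v) p) +
          (u p.1 p.2 + e * v p.1 p.2) ^ n *
            (px (Function.uncurry u) p + e * px (Function.uncurry v) p) ^ 2 -
          (px (Function.uncurry u) p * pt (Function.uncurry u) p +
            u p.1 p.2 ^ n * px (Function.uncurry u) p ^ 2)) =
        fun e => GG n u v e p := rfl
    rw [← hfn]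
    refine h.congr_deriv ?_
    simp only [GG', Pi.pow_apply]
    push_cast
    ring
  -- continuity of GG and GG'
  have hGc : ∀ ε : ℝ, Continuous (fun p => GG n u v ε p) := by
    intro ε
    simp only [GG]
    exact (((hcpxu.add (continuous_const.mul hcpxv)).mul
        (hcptu.add (continuous_const.mul hcptv))).add
        (((hcu.add (continuous_const.mul hcv)).pow n).mul
          ((hcpxu.add (continuous_const.mul hcpxv)).pow 2))).sub
      ((hcpxu.mul hcptu).add ((hcu.pow n).mul (hcpxu.pow 2)))
  have hG'c2 : Continuous (fun q : ℝ × (ℝ × ℝ) => GG' n u v q.1 q.2) := by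
    simp only [GG']
    refine (((hcpxv.comp continuous_snd).mul
        ((hcptu.comp continuous_snd).add
          (continuous_fst.mul (hcptv.comp continuous_snd)))).add
        (((hcpxu.comp continuous_snd).add
          (continuous_fst.mul (hcpxv.comp continuous_snd))).mul
          (hcptv.comp continuous_snd))).add
      ((((continuous_const.mul (((hcu.comp continuous_snd).add
            (continuous_fst.mul (hcv.comp continuous_snd))).pow (n - 1))).mul
          (hcv.comp continuous_snd)).mul
          (((hcpxu.comp continuous_snd).add
            (continuous_fst.mul (hcpxv.comp continuous_snd))).pow 2)).add
        ((((hcu.comp continuous_snd).add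
            (continuous_fst.mul (hcv.comp continuous_snd))).pow n).mul
          ((continuous_const.mul ((hcpxu.comp continuous_snd).add
              (continuous_fst.mul (hcpxv.comp continuous_snd)))).mul
            (hcpxv.comp continuous_snd))))
  have hG'0c : Continuous (fun p : ℝ × ℝ => GG' n u v 0 p) :=
    hG'c2.comp (continuous_const.prodMk continuous_id)
  -- vanishing of GG' off the support of v
  have hvanish : ∀ (ε : ℝ) (p : ℝ × ℝ), p ∉ tsupport (Function.uncurry v) →
      GG' n u v ε p = 0 := by
    intro ε p hp
    have hV0 : v p.1 p.2 = 0 := image_eq_zero_of_notMem_tsupport (f := Function.uncurry v) hp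
    have hfd : fderiv ℝ (Function.uncurry v) p = 0 := by
      by_contra h
      exact hp (support_fderiv_subset ℝ (by simpa [Function.mem_support] using h))
    have hvx0 : px (Function.uncurry v) p = 0 := by simp [px, hfd]
    have hvt0 : pt (Function.uncurry v) p = 0 := by simp [pt, hfd]
    simp [GG', hvx0, hvt0, hV0]
  -- uniform bound near ε = 0
  obtain ⟨C, hC⟩ := (IsCompact.exists_bound_of_continuousOn
    ((isCompact_Icc (a := (-1 : ℝ)) (b := 1)).prod hvs) hG'c2.continuousOn)
  have hKm : MeasurableSet (tsupport (Function.uncurry v)) :=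
    (isClosed_tsupport _).measurableSet
  have h_bound : ∀ᵐ p : ℝ × ℝ, ∀ ε ∈ Metric.ball (0 : ℝ) 1,
      ‖GG' n u v ε p‖ ≤ (tsupport (Function.uncurry v)).indicator (fun _ => C) p := by
    refine Filter.Eventually.of_forall fun p => fun ε hε => ?_
    by_cases hp : p ∈ tsupport (Function.uncurry v)
    · rw [Set.indicator_of_mem hp]
      have h1 : |ε| ≤ 1 := by
        have := Metric.mem_ball.mp hε
        rw [Real.dist_eq, sub_zero] at this
        exact this.le
      exact hC (ε, p) ⟨⟨(abs_le.mp h1).1, (abs_le.mp h1).2⟩, hp⟩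
    · rw [Set.indicator_of_notMem hp, hvanish ε p hp]
      simp
  have hbint : Integrable ((tsupport (Function.uncurry v)).indicator fun _ : ℝ × ℝ => C) := by
    rw [integrable_indicator_iff hKm]
    exact integrableOn_const hvs.measure_lt_top.ne
  have hG0 : (fun p : ℝ × ℝ => GG n u v 0 p) = fun _ => (0 : ℝ) := by
    funext p
    simp [GG]
  have hmain := hasDerivAt_integral_of_dominated_loc_of_deriv_le (μ := volume)
    (F := fun ε p => GG n u v ε p) (F' := fun ε p => GG' n u v ε p) (x₀ := 0)
    (bound := (tsupport (Function.uncurry v)).indicator fun _ => C) (Metric.ball_mem_nhds 0 one_pos)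
    (Filter.Eventually.of_forall fun ε => (hGc ε).aestronglyMeasurable)
    ((integrable_zero _ ℝ volume).congr (Filter.Eventually.of_forall fun p => by simp [GG]))
    hG'0c.aestronglyMeasurable h_bound hbint
    (Filter.Eventually.of_forall fun p => fun ε hε => hG'At p ε)
  -- the first variation vanishes
  have hkey : (∫ p : ℝ × ℝ, GG' n u v 0 p) = 0 := by
    have hI1 : ∫ p : ℝ × ℝ, fderiv ℝ (F1 u v) p (1, 0) = 0 :=
      integral_pd_fst_eq_zero hF11 hs1
    have hI2 : ∫ p : ℝ × ℝ, fderiv ℝ (F2 n u v) p (0, 1) = 0 :=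
      integral_pd_snd_eq_zero hF21 hs2
    have hint1 : Integrable (fun p : ℝ × ℝ => fderiv ℝ (F1 u v) p (1, 0)) :=
      ((hF11.continuous_fderiv one_ne_zero).clm_apply
        continuous_const).integrable_of_hasCompactSupport (fderiv_apply_support hs1 _)
    have hint2 : Integrable (fun p : ℝ × ℝ => fderiv ℝ (F2 n u v) p (0, 1)) :=
      ((hF21.continuous_fderiv one_ne_zero).clm_apply
        continuous_const).integrable_of_hasCompactSupport (fderiv_apply_support hs2 _)
    have hfdU : Differentiable ℝ (fderiv ℝ (Function.uncurry u)) :=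
      (hu.fderiv_right (m := 1) (by norm_num)).differentiable one_ne_zero
    have hpt : ∀ p : ℝ × ℝ, GG' n u v 0 p =
        fderiv ℝ (F1 u v) p (1, 0) + fderiv ℝ (F2 n u v) p (0, 1) := by
      intro p
      have hdux : DifferentiableAt ℝ (px (Function.uncurry u)) p := hux1.differentiable one_ne_zero p
      have hdut : DifferentiableAt ℝ (pt (Function.uncurry u)) p := hut1.differentiable one_ne_zero p
      have hdPhi : DifferentiableAt ℝ (Phi n u) p := hPhi1.differentiable one_ne_zero p
      have hdW : DifferentiableAt ℝ (fun q => pt (Function.uncurry u) q + 2 * Phi n u q) p :=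
        hdut.add (hdPhi.const_mul 2)
      have e1 : fderiv ℝ (F1 u v) p ((1 : ℝ), (0 : ℝ)) =
          px (Function.uncurry u) p * pt (Function.uncurry v) p +
            v p.1 p.2 * pt (px (Function.uncurry u)) p := by
        have h' : fderiv ℝ (F1 u v) p =
            px (Function.uncurry u) p • fderiv ℝ (Function.uncurry v) p +
              v p.1 p.2 • fderiv ℝ (px (Function.uncurry u)) p := fderiv_mul hdux (hVd p)
        rw [h']
        simp only [ContinuousLinearMap.add_apply, ContinuousLinearMap.coe_smul',
          Pi.smul_apply, smul_eq_mul, pt]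
      have e2 : fderiv ℝ (F2 n u v) p ((0 : ℝ), (1 : ℝ)) =
          (pt (Function.uncurry u) p + 2 * Phi n u p) * px (Function.uncurry v) p +
            v p.1 p.2 * (px (pt (Function.uncurry u)) p + 2 * px (Phi n u) p) := by
        have h' : fderiv ℝ (F2 n u v) p =
            (pt (Function.uncurry u) p + 2 * Phi n u p) • fderiv ℝ (Function.uncurry v) p +
              v p.1 p.2 • fderiv ℝ (fun q => pt (Function.uncurry u) q + 2 * Phi n u q) p :=
          fderiv_mul hdW (hVd p)
        have hW' : fderiv ℝ (fun q => pt (Function.uncurry u) q + 2 * Phi n u q) p =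
            fderiv ℝ (pt (Function.uncurry u)) p + (2 : ℝ) • fderiv ℝ (Phi n u) p := by
          rw [fderiv_fun_add hdut (hdPhi.const_mul 2), fderiv_const_mul hdPhi 2]
        rw [h', hW']
        simp only [ContinuousLinearMap.add_apply, ContinuousLinearMap.coe_smul',
          Pi.smul_apply, smul_eq_mul, px]
        
      have happx : HasFDerivAt (px (Function.uncurry u))
          ((ContinuousLinearMap.apply ℝ ℝ ((0 : ℝ), (1 : ℝ))).comp
            (fderiv ℝ (fderiv ℝ (Function.uncurry u)) p)) p :=
        (ContinuousLinearMap.apply ℝ ℝ ((0 : ℝ), (1 : ℝ))).hasFDerivAt.comp p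
          (hfdU p).hasFDerivAt
      have happt : HasFDerivAt (pt (Function.uncurry u))
          ((ContinuousLinearMap.apply ℝ ℝ ((1 : ℝ), (0 : ℝ))).comp
            (fderiv ℝ (fderiv ℝ (Function.uncurry u)) p)) p :=
        (ContinuousLinearMap.apply ℝ ℝ ((1 : ℝ), (0 : ℝ))).hasFDerivAt.comp p
          (hfdU p).hasFDerivAt
      have hsy : fderiv ℝ (fderiv ℝ (Function.uncurry u)) p (1, 0) (0, 1) =
          fderiv ℝ (fderiv ℝ (Function.uncurry u)) p (0, 1) (1, 0) :=
        (hu.contDiffAt.isSymmSndFDerivAt (by simp)).eq _ _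
      have hiii : pt (px (Function.uncurry u)) p = px (pt (Function.uncurry u)) p := by
        have e3 : pt (px (Function.uncurry u)) p =
            fderiv ℝ (fderiv ℝ (Function.uncurry u)) p (1, 0) (0, 1) := by
          have h := happx.fderiv
          calc pt (px (Function.uncurry u)) p
              = fderiv ℝ (px (Function.uncurry u)) p (1, 0) := rfl
            _ = ((ContinuousLinearMap.apply ℝ ℝ ((0 : ℝ), (1 : ℝ))).comp
                  (fderiv ℝ (fderiv ℝ (Function.uncurry u)) p)) (1, 0) := by rw [h]
            _ = fderiv ℝ (fderiv ℝ (Function.uncurry u)) p (1, 0) (0, 1) := rfl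
        have e4 : px (pt (Function.uncurry u)) p =
            fderiv ℝ (fderiv ℝ (Function.uncurry u)) p (0, 1) (1, 0) := by
          have h := happt.fderiv
          calc px (pt (Function.uncurry u)) p
              = fderiv ℝ (pt (Function.uncurry u)) p (0, 1) := rfl
            _ = ((ContinuousLinearMap.apply ℝ ℝ ((1 : ℝ), (0 : ℝ))).comp
                  (fderiv ℝ (fderiv ℝ (Function.uncurry u)) p)) (0, 1) := by rw [h]
            _ = fderiv ℝ (fderiv ℝ (Function.uncurry u)) p (0, 1) (1, 0) := rfl
        rw [e3, e4, hsy]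
      have hD1 : HasDerivAt (fun x' => pt (Function.uncurry u) (p.1, x'))
          (px (pt (Function.uncurry u)) p) p.2 := hasDerivAt_snd hdut
      have hD2 : HasDerivAt (fun x' => Phi n u (p.1, x')) (px (Phi n u) p) p.2 :=
        hasDerivAt_snd hdPhi
      have hfe : (fun x' => pt (Function.uncurry u) (p.1, x') + Phi n u (p.1, x')) =
          (fun x' => deriv (fun s => u s x') p.1 +
            u p.1 x' ^ n * deriv (fun z => u p.1 z) x') := by
        funext x'
        have h1 : deriv (fun s => u s x') p.1 = pt (Function.uncurry u) (p.1, x') :=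
          (hasDerivAt_fst (hUd (p.1, x'))).deriv
        have h2 : deriv (fun z => u p.1 z) x' = px (Function.uncurry u) (p.1, x') :=
          (hasDerivAt_snd (hUd (p.1, x'))).deriv
        rw [h1, h2]
        rfl
      have hsum : HasDerivAt (fun x' => deriv (fun s => u s x') p.1 +
          u p.1 x' ^ n * deriv (fun z => u p.1 z) x')
          (px (pt (Function.uncurry u)) p + px (Phi n u) p) p.2 := by
        rw [← hfe]
        exact hD1.add hD2
      have hPDE : px (pt (Function.uncurry u)) p + px (Phi n u) p =
          (n : ℝ) / 2 * u p.1 p.2 ^ (n - 1) * px (Function.uncurry u) p ^ 2 := by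
        have h0 := heq p.1 p.2
        rw [hsum.deriv] at h0
        rwa [show deriv (fun z => u p.1 z) p.2 = px (Function.uncurry u) p from
          (hasDerivAt_snd (hUd p)).deriv] at h0
      rw [e1, e2]
      simp only [GG', Phi]
      rw [hiii]
      linear_combination (-2 * v p.1 p.2) * hPDE
    calc (∫ p : ℝ × ℝ, GG' n u v 0 p)
        = ∫ p : ℝ × ℝ, (fderiv ℝ (F1 u v) p (1, 0) + fderiv ℝ (F2 n u v) p (0, 1)) :=
          integral_congr_ae (Filter.Eventually.of_forall hpt)
      _ = (∫ p : ℝ × ℝ, fderiv ℝ (F1 u v) p (1, 0)) +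
            ∫ p : ℝ × ℝ, fderiv ℝ (F2 n u v) p (0, 1) := integral_add hint1 hint2
      _ = 0 := by rw [hI1, hI2, add_zero]
  have hfinal : HasDerivAt (fun ε => ∫ p : ℝ × ℝ, GG n u v ε p)
      (∫ p : ℝ × ℝ, GG' n u v 0 p) 0 := hmain.2
  rw [hkey] at hfinal
  exact hfinal
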